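/- Suppose that for every choice of l distinct row indices μ = (μ_1,…,μ_l) with 1 ≤ μ_1 < … < μ_l ≤ m and l distinct column indices ν = (ν_1,…,ν_l) with 0 ≤ ν_1 < … < ν_l ≤ m, the l×l determinant det [ε_n^{(μ_i,ν_j)}]_{i,j=1,…,l} tends to 0 as n → ∞. Suppose furthermore that for every n = 0,1,2,…, the (m+1)×(m+1) matrix whose first row is [q_n^{(0)},…,q_n^{(m)}] and whose remaining m rows are [p_n^{(μ,0)},…,p_n^{(μ,m)}] (μ=1,…,m) has non-zero determinant. Then the dimension over ℚ of ℚ + ℚγ_1 + ⋯ + ℚγ_m is at least 2 + m − l. -/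

import Mathlib

open Filter Matrix

theorem det_mul_expand {n : ℕ} {ι : Type*} [Fintype ι] [DecidableEq ι] {R : Type*} [CommRing R]
    (X : Matrix (Fin n) ι R) (Y : Matrix ι (Fin n) R) :
    (X * Y).det = ∑ r : Fin n → ι, (∏ k, X k (r k)) * (Y.submatrix r id).det := by
  have h1 : (X * Y).det = Matrix.detRowAlternating (fun k => ∑ i, X k i • Y i) := by
    congr 1
    ext k j
    simp [Matrix.mul_apply, Finset.sum_apply]
  have h2 := (Matrix.detRowAlternating (R := R) (n := Fin n)).toMultilinearMap.map_sum
    (g := fun (k : Fin n) (i : ι) => X k i • Y i)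
  simp only [AlternatingMap.coe_multilinearMap] at h2
  rw [h1, h2]
  refine Finset.sum_congr rfl fun r _ => ?_
  have h3 := (Matrix.detRowAlternating (R := R) (n := Fin n)).toMultilinearMap.map_smul_univ
    (fun k => X k (r k)) (fun k => Y (r k))
  simp only [AlternatingMap.coe_multilinearMap] at h3
  rw [h3]
  simp [smul_eq_mul]
  rfl

theorem exists_strictMono_perm' {l : ℕ} {α : Type*} [LinearOrder α] (f : Fin l → α)
    (hf : Function.Injective f) :
    ∃ (s : Fin l → α) (σ : Equiv.Perm (Fin l)), StrictMono s ∧ f = s ∘ σ := by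
  refine ⟨f ∘ Tuple.sort f, (Tuple.sort f)⁻¹, ?_, ?_⟩
  · exact (Tuple.monotone_sort f).strictMono_of_injective (hf.comp (Tuple.sort f).injective)
  · ext k; simp

theorem exists_int_of_den_dvd (x : ℚ) (n : ℕ) (h : (x.den : ℕ) ∣ n) :
    ∃ z : ℤ, (z : ℚ) = n * x := by
  obtain ⟨c, hc⟩ := h
  refine ⟨x.num * c, ?_⟩
  have hden : (x.den : ℚ) ≠ 0 := by exact_mod_cast x.den_nz
  have hx : (x.den : ℚ) * x = (x.num : ℚ) := by
    rw [mul_comm, eq_comm, ← div_eq_iff hden, eq_comm]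
    exact (Rat.num_div_den x).symm
  push_cast [hc]
  rw [mul_assoc, mul_comm (c:ℚ) x, ← mul_assoc, hx]

theorem minors_tendsto {m n l : ℕ} (E : ℕ → Fin m → Fin n → ℝ)
    (h : ∀ (μs : Fin l → Fin m) (νs : Fin l → Fin n), StrictMono μs → StrictMono νs →
      Tendsto (fun k => (Matrix.of fun i j => E k (μs i) (νs j)).det) atTop (nhds 0))
    (f : Fin l → Fin m) (g : Fin l → Fin n) :
    Tendsto (fun k => (Matrix.of fun i j => E k (f i) (g j)).det) atTop (nhds 0) := by
  by_cases hf : Function.Injective f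
  · by_cases hg : Function.Injective g
    · obtain ⟨s, σ, hs, hfs⟩ := exists_strictMono_perm' f hf
      obtain ⟨t, τ, ht, hgt⟩ := exists_strictMono_perm' g hg
      have key : ∀ k, (Matrix.of fun i j => E k (f i) (g j)).det
          = ((Equiv.Perm.sign τ : ℤ) : ℝ) * (((Equiv.Perm.sign σ : ℤ) : ℝ)
            * (Matrix.of fun i j => E k (s i) (t j)).det) := by
        intro k
        have h1 : (Matrix.of fun i j => E k (f i) (g j))
            = (((Matrix.of fun i j => E k (s i) (t j)).submatrix σ id).submatrix id τ) := by
          ext i j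
          simp [hfs, hgt]
        rw [h1, Matrix.det_permute', Matrix.det_permute]
      simp only [key]
      have := ((h s t hs ht).const_mul (((Equiv.Perm.sign σ : ℤ) : ℝ))).const_mul
        (((Equiv.Perm.sign τ : ℤ) : ℝ))
      simpa [mul_comm] using this
    · obtain ⟨a, b, hab, hne⟩ := Function.not_injective_iff.mp hg
      have : ∀ k, (Matrix.of fun i j => E k (f i) (g j)).det = 0 := fun k =>
        Matrix.det_zero_of_column_eq hne (fun i => by simp [hab])
      simp only [this]
      exact tendsto_const_nhds
  · obtain ⟨a, b, hab, hne⟩ := Function.not_injective_iff.mp hf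
    have : ∀ k, (Matrix.of fun i j => E k (f i) (g j)).det = 0 := fun k =>
      Matrix.det_zero_of_row_eq hne (funext fun j => by simp [hab])
    simp only [this]
    exact tendsto_const_nhds

theorem stmt_2 (m l : ℕ) (hl : 1 ≤ l) (hlm : l ≤ m)
    (γ : Fin m → ℝ) (q : ℕ → Fin (m + 1) → ℤ) (p : ℕ → Fin m → Fin (m + 1) → ℤ)
    (ε : ℕ → Fin m → Fin (m + 1) → ℝ)
    (hε : ∀ n μ ν, ε n μ ν = (q n ν : ℝ) * γ μ - (p n μ ν : ℝ))
    (hdet : ∀ (μs : Fin l → Fin m) (νs : Fin l → Fin (m + 1)),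
      StrictMono μs → StrictMono νs →
      Tendsto (fun n => (Matrix.of fun i j => ε n (μs i) (νs j)).det) atTop (nhds 0))
    (hnonsing : ∀ n : ℕ,
      (Matrix.of fun (i : Fin (m + 1)) (ν : Fin (m + 1)) =>
        Fin.cases (motive := fun _ => ℤ) (q n ν) (fun μ => p n μ ν) i).det ≠ 0) :
    ((2 + m - l : ℕ) : Cardinal) ≤
      Module.rank ℚ ↥(Submodule.span ℚ (insert (1 : ℝ) (Set.range γ))) := by
  by_contra hcon
  -- the span is finite dimensional
  have hfd : FiniteDimensional ℚ ↥(Submodule.span ℚ (insert (1 : ℝ) (Set.range γ))) :=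
    FiniteDimensional.span_of_finite ℚ ((Set.finite_range γ).insert 1)
  -- finrank bound
  have hfr : Module.finrank ℚ ↥(Submodule.span ℚ (insert (1 : ℝ) (Set.range γ)))
      ≤ m - l + 1 := by
    rw [← Module.finrank_eq_rank ℚ] at hcon
    rw [not_le, Nat.cast_lt] at hcon
    omega
  -- the linear map
  set g : Fin (m + 1) → ℝ := Fin.cons 1 γ with hg
  set φ : (Fin (m + 1) → ℚ) →ₗ[ℚ] ℝ := Fintype.linearCombination ℚ g with hφ
  have hrange : LinearMap.range φ = Submodule.span ℚ (insert (1 : ℝ) (Set.range γ)) := by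
    rw [hφ, Fintype.range_linearCombination, hg, Fin.range_cons]
  have hkerrank : l ≤ Module.finrank ℚ (LinearMap.ker φ) := by
    have h1 := LinearMap.finrank_range_add_finrank_ker φ
    rw [Module.finrank_fin_fun, hrange] at h1
    omega
  obtain ⟨b₀, hb₀⟩ := exists_linearIndependent_of_le_finrank hkerrank
  set b : Fin l → (Fin (m + 1) → ℚ) := fun k => (b₀ k : Fin (m + 1) → ℚ) with hbdef
  have hb : LinearIndependent ℚ b :=
    hb₀.map' (LinearMap.ker φ).subtype (LinearMap.ker φ).ker_subtype
  have hbker : ∀ k, φ (b k) = 0 := fun k => (b₀ k).2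
  -- common denominator
  set D : ℕ := ∏ k : Fin l, ∏ i : Fin (m + 1), (b k i).den with hDdef
  have hD : D ≠ 0 := by
    rw [hDdef]
    exact Finset.prod_ne_zero_iff.mpr fun k _ =>
      Finset.prod_ne_zero_iff.mpr fun i _ => (b k i).den_nz
  have hdvd : ∀ k i, (b k i).den ∣ D := by
    intro k i
    rw [hDdef]
    exact dvd_trans (Finset.dvd_prod_of_mem (fun i => (b k i).den) (Finset.mem_univ i))
      (Finset.dvd_prod_of_mem (fun k => ∏ i : Fin (m+1), (b k i).den) (Finset.mem_univ k))
  choose c hc using fun k i => exists_int_of_den_dvd (b k i) D (hdvd k i)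
  -- matrices
  set A : ℕ → Matrix (Fin (m + 1)) (Fin (m + 1)) ℤ := fun n => Matrix.of fun i ν =>
    Fin.cases (motive := fun _ => ℤ) (q n ν) (fun μ => p n μ ν) i with hA
  set C : Matrix (Fin l) (Fin (m + 1)) ℤ := Matrix.of c with hC
  set B : ℕ → Matrix (Fin l) (Fin (m + 1)) ℤ := fun n => C * A n with hB
  -- the real relation satisfied by the integer vectors c k
  have hcrel : ∀ k, (c k 0 : ℝ) + ∑ μ : Fin m, (c k (Fin.succ μ) : ℝ) * γ μ = 0 := by
    intro k
    have h1 : (∑ i : Fin (m + 1), ((b k i : ℚ) : ℝ) * g i) = 0 := by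
      have := hbker k
      rw [hφ, Fintype.linearCombination_apply] at this
      simpa [Rat.smul_def] using this
    have h2 : (∑ i : Fin (m + 1), ((c k i : ℤ) : ℝ) * g i) = 0 := by
      have : ∀ i : Fin (m + 1), ((c k i : ℤ) : ℝ) = (D : ℝ) * ((b k i : ℚ) : ℝ) := by
        intro i
        have := hc k i
        have h3 : (((c k i : ℤ) : ℚ) : ℝ) = (((D : ℚ) * b k i : ℚ) : ℝ) := by rw [this]
        push_cast at h3 ⊢
        exact h3
      simp only [this, mul_assoc, ← Finset.mul_sum]
      rw [h1, mul_zero]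
    rw [Fin.sum_univ_succ] at h2
    simpa [hg] using h2
  -- entries of B over the reals
  have hBreal : ∀ n k ν, ((B n k ν : ℤ) : ℝ) = ∑ μ : Fin m, (-(c k (Fin.succ μ) : ℝ)) * ε n μ ν := by
    intro n k ν
    have h1 : (B n k ν : ℝ) = ∑ i : Fin (m + 1), ((c k i : ℤ) : ℝ) * ((A n i ν : ℤ) : ℝ) := by
      rw [hB]
      push_cast [Matrix.mul_apply]
      rfl
    rw [h1, Fin.sum_univ_succ]
    have hA0 : ∀ ν, A n 0 ν = q n ν := fun ν => rfl
    have hAs : ∀ μ ν, A n (Fin.succ μ) ν = p n μ ν := fun μ ν => rfl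
    have hrel := hcrel k
    simp only [hA0, hAs, hε]
    have : (c k 0 : ℝ) = -∑ μ : Fin m, (c k (Fin.succ μ) : ℝ) * γ μ := by linarith
    rw [this]
    have expand : ∀ x : Fin m, -(c k (Fin.succ x) : ℝ) * ((q n ν : ℝ) * γ x - (p n x ν : ℝ))
        = (c k (Fin.succ x) : ℝ) * (p n x ν : ℝ) - ((c k (Fin.succ x) : ℝ) * γ x) * (q n ν : ℝ) := by
      intro x; ring
    simp only [expand]
    rw [Finset.sum_sub_distrib, ← Finset.sum_mul]
    ring
  -- each B n has a non-vanishing l×l minor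
  have hminor : ∀ n : ℕ, ∃ r : Fin l → Fin (m + 1), ((B n).submatrix id r).det ≠ 0 := by
    intro n
    by_contra hall
    push_neg at hall
    set Bq : Matrix (Fin l) (Fin (m + 1)) ℚ := (B n).map Int.cast with hBq
    have hAq : IsUnit ((A n).map (Int.cast : ℤ → ℚ)).det := by
      refine isUnit_iff_ne_zero.mpr ?_
      have h1 : ((A n).map (Int.cast : ℤ → ℚ)).det = ((A n).det : ℚ) :=
        ((Int.castRingHom ℚ).map_det (A n)).symm
      rw [h1]
      exact_mod_cast hnonsing n
    have hinj : ∀ x : Fin l → ℚ, x ᵥ* Bq = 0 → x = 0 := by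
      intro x hx
      have hmul : Bq = C.map (Int.cast : ℤ → ℚ) * (A n).map (Int.cast : ℤ → ℚ) := by
        rw [hBq, hB]
        exact Matrix.map_mul (f := Int.castRingHom ℚ)
      have h0 : x ᵥ* C.map (Int.cast : ℤ → ℚ) = 0 := by
        have h2 : (x ᵥ* C.map (Int.cast : ℤ → ℚ)) ᵥ* ((A n).map (Int.cast : ℤ → ℚ)) = 0 := by
          rw [Matrix.vecMul_vecMul, ← hmul]
          exact hx
        have h3 := congrArg (· ᵥ* ((A n).map (Int.cast : ℤ → ℚ))⁻¹) h2
        simpa [Matrix.vecMul_vecMul, Matrix.mul_assoc, Matrix.mul_nonsing_inv _ hAq] using h3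
      have h4 : ∑ k : Fin l, (x k * (D : ℚ)) • b k = 0 := by
        funext i
        have h5 := congrFun h0 i
        simp only [Matrix.vecMul, dotProduct, Matrix.map_apply, hC, Matrix.of_apply,
          Pi.zero_apply] at h5
        simp only [Finset.sum_apply, Pi.smul_apply, smul_eq_mul, Pi.zero_apply]
        rw [← h5]
        refine Finset.sum_congr rfl fun k _ => ?_
        rw [hc k i]
        ring
      have h5 := Fintype.linearIndependent_iff.mp hb _ h4
      funext k
      have h6 := h5 k
      have hDQ : (D : ℚ) ≠ 0 := by exact_mod_cast hD
      have := mul_eq_zero.mp h6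
      tauto
    have hker : LinearMap.ker (Matrix.toLin' Bqᵀ) = ⊥ := by
      rw [LinearMap.ker_eq_bot']
      intro x hx
      refine hinj x ?_
      rw [← Matrix.mulVec_transpose]
      rw [Matrix.toLin'_apply] at hx
      exact hx
    obtain ⟨gg, hgg⟩ := (Matrix.toLin' Bqᵀ).exists_leftInverse_of_injective hker
    have hH : (LinearMap.toMatrix' gg) * Bqᵀ = 1 := by
      have h7 := congrArg LinearMap.toMatrix' hgg
      rwa [LinearMap.toMatrix'_comp, LinearMap.toMatrix'_toLin', LinearMap.toMatrix'_id] at h7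
    have hone : (1 : ℚ) = ∑ r : Fin l → Fin (m + 1),
        (∏ k, (LinearMap.toMatrix' gg) k (r k)) * ((Bqᵀ).submatrix r id).det := by
      rw [← det_mul_expand, hH, Matrix.det_one]
    have hzero : ∀ r : Fin l → Fin (m + 1), ((Bqᵀ).submatrix r id).det = 0 := by
      intro r
      have e1 : (Bqᵀ).submatrix r id = (((B n).submatrix id r).map (Int.cast : ℤ → ℚ))ᵀ := by
        ext i j
        rfl
      have e3 : (((B n).submatrix id r).map (Int.cast : ℤ → ℚ)).det
          = ((((B n).submatrix id r).det : ℤ) : ℚ) := ((Int.castRingHom ℚ).map_det _).symm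
      rw [e1, Matrix.det_transpose, e3, hall r]
      simp
    simp only [hzero, mul_zero, Finset.sum_const_zero] at hone
    exact one_ne_zero hone
  -- every l×l minor of B n tends to 0
  have hlim : ∀ r : Fin l → Fin (m + 1),
      Tendsto (fun n => (((B n).submatrix id r).det : ℝ)) atTop (nhds 0) := by
    intro r
    have key : ∀ n, (((B n).submatrix id r).det : ℝ)
        = ∑ f : Fin l → Fin m,
            (∏ k, (Matrix.of fun (k : Fin l) (μ : Fin m) => -(c k (Fin.succ μ) : ℝ)) k (f k))
            * (Matrix.of fun i j => ε n (f i) (r j)).det := by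
      intro n
      have e1 : (((B n).submatrix id r).map (Int.cast : ℤ → ℝ))
          = (Matrix.of fun (k : Fin l) (μ : Fin m) => -(c k (Fin.succ μ) : ℝ))
            * (Matrix.of fun (μ : Fin m) (j : Fin l) => ε n μ (r j)) := by
        ext k j
        simp only [Matrix.map_apply, Matrix.submatrix_apply, id_eq, Matrix.mul_apply,
          Matrix.of_apply]
        rw [hBreal n k (r j)]
      have e2 : (((B n).submatrix id r).det : ℝ)
          = (((B n).submatrix id r).map (Int.cast : ℤ → ℝ)).det :=
        (Int.castRingHom ℝ).map_det _
      rw [e2, e1, det_mul_expand]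
      rfl
    simp only [key]
    have h := tendsto_finset_sum (f := fun (f : Fin l → Fin m) (n : ℕ) =>
        (∏ k, (Matrix.of fun (k : Fin l) (μ : Fin m) => -(c k (Fin.succ μ) : ℝ)) k (f k))
        * (Matrix.of fun i j => ε n (f i) (r j)).det) Finset.univ
      (fun f _ => (minors_tendsto ε hdet f r).const_mul _)
    simpa using h
  -- contradiction
  have hF1 : ∀ n, (1 : ℝ) ≤ ∑ r : Fin l → Fin (m + 1), |(((B n).submatrix id r).det : ℝ)| := by
    intro n
    obtain ⟨r, hr⟩ := hminor n
    have h1 : (1 : ℝ) ≤ |(((B n).submatrix id r).det : ℝ)| := by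
      rw [← Int.cast_abs]
      exact_mod_cast Int.one_le_abs hr
    exact le_trans h1 (Finset.single_le_sum
      (f := fun r : Fin l → Fin (m + 1) => |(((B n).submatrix id r).det : ℝ)|)
      (fun r _ => abs_nonneg _) (Finset.mem_univ r))
  have hF0 : Tendsto (fun n => ∑ r : Fin l → Fin (m + 1),
      |(((B n).submatrix id r).det : ℝ)|) atTop (nhds 0) := by
    have h := tendsto_finset_sum (f := fun (r : Fin l → Fin (m + 1)) (n : ℕ) =>
      |(((B n).submatrix id r).det : ℝ)|) Finset.univ (fun r _ => (hlim r).abs)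
    simpa using h
  have hcontr := ge_of_tendsto' hF0 hF1
  linarith
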